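/- arXiv:2106.12500 — 2 statements merged into one kernel-verified Lean document; each statement's English description precedes it below -/
import Mathlib

section
/- Iwahori–Matsumoto presentation: suppose G, I, N, W̃ = W_aff ⋊ Ω satisfy axioms (T0), (T3), (T4), (TΩ), (TS), (TF). Then the Iwahori–Hecke ring H(G,I) satisfies the braid relations i_w ⋆ i_{w'} = i_{ww'} for all w, w' ∈ W̃ with ℓ(w) + ℓ(w') = ℓ(ww'), and the quadratic relations i_s ⋆ i_s = q_s·i_1 + (q_s − 1)·i_s for every s ∈ S. -/
open scoped Pointwise

/-! ## Setting

`G` is a group with subgroups `I` and `N` such that `T := I ⊓ N` is normal in `N`, and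
`W̃ := N/T` is presented via a surjective homomorphism `π : N →* W̃` whose kernel consists of
the elements of `N` lying in `I`.  `W̃ = W_aff ⋊ Ω` is an internal semidirect product, where
`W_aff` carries a Coxeter system `cs` (with simple reflections indexed by `B`), the length
function `ℓ` of `cs` is extended to `W̃` by `ℓ (w * u) = ℓ w` for `w ∈ W_aff`, `u ∈ Ω`, and
the axioms (T0), (T3), (T4), (TΩ), (TS), (TF) hold. -/

/-- The double coset `I·n·I ⊆ G` attached to an element `w ∈ W̃ = N/T`, described as the union
of `I·n·I` over all representatives `n ∈ N` of `w` (these double cosets all coincide, since any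
two representatives differ by an element of `T = I ⊓ N ⊆ I`). -/
def IwI {G : Type} [Group G] {W : Type} [Group W] (I : Subgroup G) {N : Subgroup G}
    (π : N →* W) (w : W) : Set G :=
  {g : G | ∃ n : N, π n = w ∧ ∃ i ∈ I, ∃ j ∈ I, g = i * (n : G) * j}

/-- The basis element `i_w = 1_{IwI} : G → ℤ` of the Iwahori–Hecke ring. -/
noncomputable def iw {G : Type} [Group G] {W : Type} [Group W] (I : Subgroup G) {N : Subgroup G}
    (π : N →* W) (w : W) : G → ℤ :=
  (IwI I π w).indicator fun _ => (1 : ℤ)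

/-- Convolution of `ℤ`-valued functions on `G` relative to `I`:
`(f ⋆ f')(x) = Σ_{yI ∈ G/I} f(y)·f'(y⁻¹x)` (the value of `f` at a left coset `yI` is computed
at a chosen representative; this is independent of the choices when `f` is right `I`-invariant
and `f'` is left `I`-invariant). -/
noncomputable def hconv {G : Type} [Group G] (I : Subgroup G) (f f' : G → ℤ) : G → ℤ :=
  fun x => ∑ᶠ y : G ⧸ I, f (Quotient.out y) * f' ((Quotient.out y)⁻¹ * x)

/-- The left cosets of `I` contained in a (right `I`-stable) subset `A ⊆ G`, viewed as the
image of `A` in `G/I`. -/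
def leftCosetsIn {G : Type} [Group G] (I : Subgroup G) (A : Set G) : Set (G ⧸ I) :=
  QuotientGroup.mk '' A

/-- A function `f : G → ℤ` belongs to the Iwahori–Hecke ring `H(G,I)` iff it is left and right
`I`-invariant and vanishes outside finitely many double cosets of `I`. -/
def IsHeckeElt {G : Type} [Group G] {W : Type} [Group W] (I : Subgroup G) {N : Subgroup G}
    (π : N →* W) (f : G → ℤ) : Prop :=
  (∀ i ∈ I, ∀ g : G, f (i * g) = f g) ∧ (∀ i ∈ I, ∀ g : G, f (g * i) = f g) ∧
    {w : W | ∃ g ∈ IwI I π w, f g ≠ 0}.Finite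

/-- The data and axioms of the Iwahori–Matsumoto setting. -/
structure IwahoriHeckeSetup (G W B : Type) [Group G] [Group W] (M : CoxeterMatrix B) where
  /-- the "Iwahori" subgroup -/
  I : Subgroup G
  /-- the subgroup `N` -/
  N : Subgroup G
  /-- the quotient map `N → W̃ = N/T`, `T = I ∩ N` -/
  π : N →* W
  π_surjective : Function.Surjective π
  /-- the kernel of `π` is exactly `T = I ∩ N` (so `T` is normal in `N` and `W̃ = N/T`) -/
  π_ker : ∀ n : N, π n = 1 ↔ (n : G) ∈ I
  /-- the normal subgroup `W_aff` of `W̃` -/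
  Waff : Subgroup W
  /-- the subgroup `Ω` of `W̃` -/
  Om : Subgroup W
  Waff_normal : Waff.Normal
  /-- `W̃ = W_aff · Ω` -/
  sd_prod : ∀ w : W, ∃ wa ∈ Waff, ∃ u ∈ Om, w = wa * u
  /-- `W_aff ∩ Ω = 1` -/
  sd_disj : Waff ⊓ Om = ⊥
  /-- the Coxeter system `(W_aff, S)`, `S = {simple b | b : B}` -/
  cs : CoxeterSystem M Waff
  /-- the length function of `(W_aff, S)`, extended to `W̃` -/
  len : W → ℕ
  len_spec : ∀ (wa : Waff) (u : Om), len ((wa : W) * (u : W)) = cs.length wa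
  /-- `q w` = the number of left cosets of `I` contained in `IwI` -/
  q : W → ℕ
  /-- (T0): `G` is covered by the double cosets `IwI`, `w ∈ W̃` ... -/
  T0_cover : ∀ g : G, ∃ w : W, g ∈ IwI I π w
  /-- (T0): ... and distinct double cosets are disjoint -/
  T0_disjoint : ∀ w w' : W, w ≠ w' → Disjoint (IwI I π w) (IwI I π w')
  /-- (T3): `sIw ⊆ IwI ∪ IswI` for all `s ∈ S`, `w ∈ W̃` -/
  T3 : ∀ (b : B) (w : W) (ns nw : N), π ns = (cs.simple b : W) → π nw = w →
      ∀ i ∈ I, (ns : G) * i * (nw : G) ∈ IwI I π w ∪ IwI I π ((cs.simple b : W) * w)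
  /-- (T4): `sIs ⊄ I` for all `s ∈ S` -/
  T4 : ∀ (b : B) (ns ns' : N), π ns = (cs.simple b : W) → π ns' = (cs.simple b : W) →
      ¬ (∀ i ∈ I, (ns : G) * i * (ns' : G) ∈ I)
  /-- (TΩ): representatives in `N` of elements of `Ω` normalize `I` -/
  TOm : ∀ n : N, π n ∈ Om → ∀ i ∈ I, (n : G) * i * (n : G)⁻¹ ∈ I
  /-- (TS): `uSu⁻¹ = S` for all `u ∈ Ω` -/
  TS : ∀ u ∈ Om, ∀ b : B, ∃ b' : B, u * (cs.simple b : W) * u⁻¹ = (cs.simple b' : W)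
  /-- (TF): every double coset `IwI` is a finite union of left cosets of `I`, and `q w` is
  their number -/
  TF : ∀ w : W, (leftCosetsIn I (IwI I π w)).Finite ∧
      q w = (leftCosetsIn I (IwI I π w)).ncard

/-! If `ℓ(sw) = ℓ(w) + 1`, then (T3) gives `IsI · IwI ⊆ IwI ∪ IswI`, and an induction on `ℓ(w)`,
splitting a simple reflection off the right of `w`, excludes `IwI`. Splitting simple reflections
off the left, a second induction shows that for `ℓ(w) + ℓ(w') = ℓ(ww')` every `g ∈ Iww'I` is a
product `a c` with `a ∈ IwI`, `c ∈ Iw'I`, and that `g` determines the coset `aI`; both inductions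
start at `Ω`, whose representatives normalize `I`. As `(i_w ⋆ i_w')(x)` counts the cosets
`aI ⊆ IwI` with `a⁻¹x ∈ Iw'I`, this is the braid relation, and the quadratic relation follows in
the same way from `IsI · IsI ⊆ I ∪ IsI`. -/

section DoubleCosets

variable {G W : Type} [Group G] [Group W] {I N : Subgroup G} {π : N →* W}

lemma mul_mem_IwI_left {i g : G} {w : W} (hi : i ∈ I) (hg : g ∈ IwI I π w) :
    i * g ∈ IwI I π w := by
  obtain ⟨n, hn, i', hi', j, hj, rfl⟩ := hg
  exact ⟨n, hn, i * i', mul_mem hi hi', j, hj, by group⟩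

lemma mul_mem_IwI_right {g i : G} {w : W} (hg : g ∈ IwI I π w) (hi : i ∈ I) :
    g * i ∈ IwI I π w := by
  obtain ⟨n, hn, i', hi', j, hj, rfl⟩ := hg
  exact ⟨n, hn, i', hi', j * i, mul_mem hj hi, by group⟩

lemma coe_mem_IwI (n : N) : (n : G) ∈ IwI I π (π n) :=
  ⟨n, rfl, 1, one_mem _, 1, one_mem _, by group⟩

lemma inv_mem_IwI {g : G} {w : W} (hg : g ∈ IwI I π w) : g⁻¹ ∈ IwI I π w⁻¹ := by
  obtain ⟨n, rfl, i, hi, j, hj, rfl⟩ := hg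
  exact ⟨n⁻¹, map_inv π n, j⁻¹, inv_mem hj, i⁻¹, inv_mem hi, by push_cast; group⟩

lemma IwI_one (hker : ∀ n : N, π n = 1 → (n : G) ∈ I) : IwI I π 1 = I := by
  ext g
  constructor
  · rintro ⟨n, hn, i, hi, j, hj, rfl⟩
    exact mul_mem (mul_mem hi (hker n hn)) hj
  · exact fun hg => ⟨1, map_one π, g, hg, 1, one_mem _, by simp⟩

lemma IwI_mul_subset (hπ : Function.Surjective π) (x y : W) :
    IwI I π (x * y) ⊆ IwI I π x * IwI I π y := by
  rintro _ ⟨n, hn, i, hi, j, hj, rfl⟩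
  obtain ⟨m, rfl⟩ := hπ x
  have hy : π (m⁻¹ * n) = y := by rw [map_mul, map_inv, hn, inv_mul_cancel_left]
  refine ⟨i * m, mul_mem_IwI_left hi (coe_mem_IwI m), (m⁻¹ * n : N) * j,
    mul_mem_IwI_right (hy ▸ coe_mem_IwI _) hj, ?_⟩
  push_cast
  group

lemma iw_of_mem {w : W} {g : G} (h : g ∈ IwI I π w) : iw I π w g = 1 :=
  Set.indicator_of_mem h _

lemma iw_of_notMem {w : W} {g : G} (h : g ∉ IwI I π w) : iw I π w g = 0 :=
  Set.indicator_of_notMem h _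

structure UniqueFactorization (I : Subgroup G) (π : N →* W) (w w' : W) : Prop where
  mul_subset : IwI I π w * IwI I π w' ⊆ IwI I π (w * w')
  inv_mul_mem : ∀ a₁ ∈ IwI I π w, ∀ a₂ ∈ IwI I π w, ∀ c₁ ∈ IwI I π w', ∀ c₂ ∈ IwI I π w',
    a₁ * c₁ = a₂ * c₂ → a₂⁻¹ * a₁ ∈ I

lemma UniqueFactorization.mul_left (hπ : Function.Surjective π) {x y z : W}
    (hx : UniqueFactorization I π x (y * z)) (hy : UniqueFactorization I π y z) :
    UniqueFactorization I π (x * y) z where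
  mul_subset := by
    refine Set.mul_subset_iff.mpr fun a ha c hc => ?_
    obtain ⟨p, hp, q, hq, rfl⟩ := IwI_mul_subset hπ x y ha
    rw [mul_assoc, mul_assoc]
    exact hx.mul_subset (Set.mul_mem_mul hp (hy.mul_subset (Set.mul_mem_mul hq hc)))
  inv_mul_mem := by
    intro a₁ ha₁ a₂ ha₂ c₁ hc₁ c₂ hc₂ h
    obtain ⟨p₁, hp₁, q₁, hq₁, rfl⟩ := IwI_mul_subset hπ x y ha₁
    obtain ⟨p₂, hp₂, q₂, hq₂, rfl⟩ := IwI_mul_subset hπ x y ha₂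
    have hp : p₂⁻¹ * p₁ ∈ I :=
      hx.inv_mul_mem p₁ hp₁ p₂ hp₂ _ (hy.mul_subset (Set.mul_mem_mul hq₁ hc₁))
        _ (hy.mul_subset (Set.mul_mem_mul hq₂ hc₂)) (by simpa only [mul_assoc] using h)
    have hq : q₂⁻¹ * (p₂⁻¹ * p₁ * q₁) ∈ I := by
      refine hy.inv_mul_mem _ (mul_mem_IwI_left hp hq₁) q₂ hq₂ c₁ hc₁ c₂ hc₂ ?_
      calc p₂⁻¹ * p₁ * q₁ * c₁ = p₂⁻¹ * (p₁ * q₁ * c₁) := by group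
        _ = q₂ * c₂ := by rw [h]; group
    convert hq using 1
    group

lemma hconv_indicator_one_apply (I : Subgroup G) {A C : Set G}
    (hA : ∀ a ∈ A, ∀ i ∈ I, a * i ∈ A) (hC : ∀ c ∈ C, ∀ i ∈ I, i * c ∈ C) (x : G) :
    hconv I (A.indicator fun _ => 1) (C.indicator fun _ => 1) x =
      ((leftCosetsIn I {a ∈ A | a⁻¹ * x ∈ C}).ncard : ℤ) := by
  have hmem : ∀ y : G ⧸ I, y ∈ leftCosetsIn I {a ∈ A | a⁻¹ * x ∈ C} ↔
      y.out ∈ A ∧ y.out⁻¹ * x ∈ C := by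
    intro y
    constructor
    · rintro ⟨a, ⟨ha, hax⟩, rfl⟩
      obtain ⟨i, hi⟩ := QuotientGroup.mk_out_eq_mul I a
      rw [hi, mul_inv_rev, mul_assoc]
      exact ⟨hA a ha i i.2, hC _ hax _ (inv_mem i.2)⟩
    · exact fun hy => ⟨y.out, hy, QuotientGroup.out_eq' y⟩
  have hsummand : (fun y : G ⧸ I => A.indicator (fun _ => (1 : ℤ)) y.out *
      C.indicator (fun _ => 1) (y.out⁻¹ * x)) =
      (leftCosetsIn I {a ∈ A | a⁻¹ * x ∈ C}).indicator fun _ => 1 := by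
    funext y
    by_cases hyA : y.out ∈ A <;> by_cases hyC : y.out⁻¹ * x ∈ C <;>
      simp [hmem, hyA, hyC]
  rw [hconv, hsummand, ← finsum_mem_def]
  -- an infinite set of cosets makes both `∑ᶠ` and `ncard` vanish
  rcases (leftCosetsIn I {a ∈ A | a⁻¹ * x ∈ C}).finite_or_infinite with hfin | hinf
  · rw [finsum_mem_eq_finite_toFinset_sum _ hfin, Set.ncard_eq_toFinset_card _ hfin]
    simp
  · rw [hinf.ncard, Nat.cast_zero]
    exact finsum_mem_eq_zero_of_infinite (by simpa [Function.support_const] using hinf)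

lemma hconv_iw_apply (w w' : W) (x : G) :
    hconv I (iw I π w) (iw I π w') x =
      ((leftCosetsIn I {a ∈ IwI I π w | a⁻¹ * x ∈ IwI I π w'}).ncard : ℤ) :=
  hconv_indicator_one_apply I (fun _ ha _ hi => mul_mem_IwI_right ha hi)
    (fun _ hc _ hi => mul_mem_IwI_left hi hc) x

end DoubleCosets

namespace IwahoriHeckeSetup

variable {G W B : Type} [Group G] [Group W] {M : CoxeterMatrix B}
  (D : IwahoriHeckeSetup G W B M)

lemma IwI_one_eq : IwI D.I D.π 1 = D.I :=
  IwI_one fun n => (D.π_ker n).mp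

lemma notMem_IwI_of_ne {w w' : W} (hne : w ≠ w') {g : G} (hg : g ∈ IwI D.I D.π w) :
    g ∉ IwI D.I D.π w' :=
  Set.disjoint_left.mp (D.T0_disjoint w w' hne) hg

lemma IwI_Om_mul_subset {u : W} (hu : u ∈ D.Om) (w : W) :
    IwI D.I D.π u * IwI D.I D.π w ⊆ IwI D.I D.π (u * w) := by
  refine Set.mul_subset_iff.mpr ?_
  rintro _ ⟨n, rfl, i, hi, j, hj, rfl⟩ _ ⟨m, rfl, i', hi', j', hj', rfl⟩
  refine ⟨n * m, map_mul .., i * ((n : G) * (j * i') * (n : G)⁻¹),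
    mul_mem hi (D.TOm n hu _ (mul_mem hj hi')), j', hj', ?_⟩
  push_cast
  group

lemma IwI_mul_Om_subset {u : W} (hu : u ∈ D.Om) (w : W) :
    IwI D.I D.π w * IwI D.I D.π u ⊆ IwI D.I D.π (w * u) := by
  refine Set.mul_subset_iff.mpr fun a ha c hc => ?_
  simpa using inv_mem_IwI
    (D.IwI_Om_mul_subset (inv_mem hu) w⁻¹ (Set.mul_mem_mul (inv_mem_IwI hc) (inv_mem_IwI ha)))

lemma uniqueFactorization_of_mem_Om {u : W} (hu : u ∈ D.Om) (w : W) :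
    UniqueFactorization D.I D.π u w where
  mul_subset := D.IwI_Om_mul_subset hu w
  inv_mul_mem a₁ ha₁ a₂ ha₂ _ _ _ _ _ := by
    have := D.IwI_Om_mul_subset (inv_mem hu) u (Set.mul_mem_mul (inv_mem_IwI ha₂) ha₁)
    rwa [inv_mul_cancel, D.IwI_one_eq] at this

lemma simple_mul_simple (b : B) : (D.cs.simple b : W) * D.cs.simple b = 1 := by
  rw [← Subgroup.coe_mul, D.cs.simple_mul_simple_self, OneMemClass.coe_one]

lemma inv_simple (b : B) : (D.cs.simple b : W)⁻¹ = D.cs.simple b :=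
  inv_eq_of_mul_eq_one_right (D.simple_mul_simple b)

lemma inv_mem_IwI_simple {b : B} {a : G} (ha : a ∈ IwI D.I D.π (D.cs.simple b)) :
    a⁻¹ ∈ IwI D.I D.π (D.cs.simple b) :=
  D.inv_simple b ▸ inv_mem_IwI ha

lemma IwI_simple_mul_subset (b : B) (w : W) :
    IwI D.I D.π (D.cs.simple b) * IwI D.I D.π w ⊆
      IwI D.I D.π w ∪ IwI D.I D.π (D.cs.simple b * w) := by
  refine Set.mul_subset_iff.mpr ?_
  rintro _ ⟨ns, hns, i, hi, j, hj, rfl⟩ _ ⟨nw, rfl, i', hi', j', hj', rfl⟩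
  have heq : i * ns * j * (i' * nw * j') = i * (ns * (j * i') * nw) * j' := by group
  rw [heq]
  rcases D.T3 b _ ns nw hns rfl (j * i') (mul_mem hj hi') with h | h
  · exact Or.inl (mul_mem_IwI_right (mul_mem_IwI_left hi h) hj')
  · exact Or.inr (mul_mem_IwI_right (mul_mem_IwI_left hi h) hj')

lemma IwI_mul_simple_subset (b : B) (w : W) :
    IwI D.I D.π w * IwI D.I D.π (D.cs.simple b) ⊆
      IwI D.I D.π w ∪ IwI D.I D.π (w * D.cs.simple b) := by
  refine Set.mul_subset_iff.mpr fun a ha c hc => ?_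
  rcases D.IwI_simple_mul_subset b w⁻¹
      (Set.mul_mem_mul (D.inv_mem_IwI_simple hc) (inv_mem_IwI ha)) with h | h
  · left
    simpa using inv_mem_IwI h
  · right
    simpa [D.inv_simple] using inv_mem_IwI h

lemma IwI_simple_mul_self_subset (b : B) :
    IwI D.I D.π (D.cs.simple b) * IwI D.I D.π (D.cs.simple b) ⊆
      IwI D.I D.π (D.cs.simple b) ∪ D.I := by
  simpa only [D.simple_mul_simple, D.IwI_one_eq] using D.IwI_simple_mul_subset b (D.cs.simple b)

lemma len_mul_of_mem_Om (a : D.Waff) {u : W} (hu : u ∈ D.Om) :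
    D.len (a * u) = D.cs.length a :=
  D.len_spec a ⟨u, hu⟩

lemma exists_eq_mul_mem_Om (w : W) :
    ∃ a : D.Waff, ∃ u ∈ D.Om, w = a * u ∧ D.len w = D.cs.length a := by
  obtain ⟨a, ha, u, hu, rfl⟩ := D.sd_prod w
  exact ⟨⟨a, ha⟩, u, hu, rfl, D.len_mul_of_mem_Om ⟨a, ha⟩ hu⟩

lemma exists_conj_length_le {u : W} (hu : u ∈ D.Om) (a : D.Waff) :
    ∃ a' : D.Waff, (a' : W) = u * a * u⁻¹ ∧ D.cs.length a' ≤ D.cs.length a := by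
  choose σ hσ using D.TS u hu
  have hconj : ∀ ω : List B,
      ((D.cs.wordProd (ω.map σ) : D.Waff) : W) = u * D.cs.wordProd ω * u⁻¹ := by
    intro ω
    induction ω with
    | nil => simp
    | cons b ω ih =>
      rw [List.map_cons, D.cs.wordProd_cons, D.cs.wordProd_cons, Subgroup.coe_mul,
        Subgroup.coe_mul, ← hσ, ih]
      group
  obtain ⟨ω, hω, rfl⟩ := D.cs.exists_isReduced a
  refine ⟨_, hconj ω, ?_⟩
  calc D.cs.length (D.cs.wordProd (ω.map σ)) ≤ (ω.map σ).length := D.cs.length_wordProd_le _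
    _ = D.cs.length (D.cs.wordProd ω) := by rw [List.length_map, hω]

lemma len_mul_le (x y : W) : D.len (x * y) ≤ D.len x + D.len y := by
  obtain ⟨a, u, hu, rfl, hx⟩ := D.exists_eq_mul_mem_Om x
  obtain ⟨b, v, hv, rfl, hy⟩ := D.exists_eq_mul_mem_Om y
  obtain ⟨b', hb', hlen⟩ := D.exists_conj_length_le hu b
  have heq : (a : W) * u * (b * v) = ((a * b' : D.Waff) : W) * (u * v) := by
    rw [Subgroup.coe_mul, hb']
    group
  rw [heq, D.len_mul_of_mem_Om _ (mul_mem hu hv), hx, hy]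
  exact (D.cs.length_mul_le a b').trans (by omega)

lemma len_inv_le (w : W) : D.len w⁻¹ ≤ D.len w := by
  obtain ⟨a, u, hu, rfl, hw⟩ := D.exists_eq_mul_mem_Om w
  obtain ⟨a', ha', hlen⟩ := D.exists_conj_length_le (inv_mem hu) a⁻¹
  have heq : ((a : W) * u)⁻¹ = a' * u⁻¹ := by
    rw [ha']
    push_cast
    group
  rw [heq, D.len_mul_of_mem_Om a' (inv_mem hu), hw]
  exact hlen.trans (D.cs.length_inv a).le

lemma len_inv (w : W) : D.len w⁻¹ = D.len w :=
  le_antisymm (D.len_inv_le w) (by simpa using D.len_inv_le w⁻¹)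

lemma len_one : D.len 1 = 0 := by
  simpa using D.len_mul_of_mem_Om 1 (one_mem D.Om)

lemma len_simple (b : B) : D.len (D.cs.simple b) = 1 := by
  simpa using D.len_mul_of_mem_Om (D.cs.simple b) (one_mem D.Om)

lemma len_simple_mul_le (b : B) (w : W) : D.len (D.cs.simple b * w) ≤ D.len w + 1 := by
  simpa [D.len_simple, add_comm] using D.len_mul_le (D.cs.simple b) w

lemma len_mul_simple_le (b : B) (w : W) : D.len (w * D.cs.simple b) ≤ D.len w + 1 := by
  simpa [D.len_simple] using D.len_mul_le w (D.cs.simple b)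

lemma mem_Om_of_len_eq_zero {w : W} (h : D.len w = 0) : w ∈ D.Om := by
  obtain ⟨a, u, hu, rfl, hw⟩ := D.exists_eq_mul_mem_Om w
  rw [hw, D.cs.length_eq_zero_iff] at h
  simpa [h] using hu

lemma exists_eq_simple_mul {w : W} (h : D.len w ≠ 0) :
    ∃ b v, w = D.cs.simple b * v ∧ D.len v + 1 = D.len w := by
  obtain ⟨a, u, hu, rfl, hw⟩ := D.exists_eq_mul_mem_Om w
  obtain ⟨b, hb⟩ := D.cs.exists_leftDescent_of_ne_one (w := a) fun ha =>
    h (by rw [hw, ha, D.cs.length_one])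
  refine ⟨b, ((D.cs.simple b * a : D.Waff) : W) * u, ?_, ?_⟩
  · rw [Subgroup.coe_mul, ← mul_assoc, ← mul_assoc, D.simple_mul_simple, one_mul]
  · rw [D.len_mul_of_mem_Om _ hu, hw, D.cs.isLeftDescent_iff.mp hb]

lemma exists_eq_mul_simple {w : W} (h : D.len w ≠ 0) :
    ∃ b v, w = v * D.cs.simple b ∧ D.len v + 1 = D.len w := by
  obtain ⟨b, v, hw, hlen⟩ := D.exists_eq_simple_mul (w := w⁻¹) (by rwa [D.len_inv])
  refine ⟨b, v⁻¹, ?_, ?_⟩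
  · rw [← inv_inv w, hw, mul_inv_rev, D.inv_simple]
  · rw [D.len_inv, hlen, D.len_inv]

lemma mul_notMem_IwI_of_len_simple_mul {b : B} {w : W}
    (hlen : D.len (D.cs.simple b * w) = D.len w + 1) {a h : G}
    (ha : a ∈ IwI D.I D.π (D.cs.simple b)) (hh : h ∈ IwI D.I D.π w) :
    a * h ∉ IwI D.I D.π w := by
  obtain ⟨n, hn⟩ : ∃ n, D.len w = n := ⟨_, rfl⟩
  induction n generalizing w a h with
  | zero =>
    exact D.notMem_IwI_of_ne (ne_of_apply_ne D.len (by omega))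
      (D.IwI_mul_Om_subset (D.mem_Om_of_len_eq_zero hn) _ (Set.mul_mem_mul ha hh))
  | succ n ih =>
    obtain ⟨t, v, rfl, hv⟩ := D.exists_eq_mul_simple (w := w) (by omega)
    obtain ⟨p, hp, c, hc, rfl⟩ := IwI_mul_subset D.π_surjective v _ hh
    have hsv : D.len (D.cs.simple b * v) = D.len v + 1 := by
      have := D.len_mul_simple_le t (D.cs.simple b * v)
      have := D.len_simple_mul_le b v
      rw [mul_assoc] at *
      omega
    rcases D.IwI_simple_mul_subset b v (Set.mul_mem_mul ha hp) with hap | hap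
    · exact absurd hap (ih hsv ha hp (by omega))
    · have hne : D.cs.simple b * v ≠ v * D.cs.simple t := by
        intro he
        have : D.cs.simple b * (v * D.cs.simple t) = v := by
          rw [← he, ← mul_assoc, D.simple_mul_simple, one_mul]
        rw [this] at hlen
        omega
      rw [← mul_assoc]
      rcases D.IwI_mul_simple_subset t _ (Set.mul_mem_mul hap hc) with hapc | hapc
      · exact D.notMem_IwI_of_ne hne hapc
      · rw [mul_assoc] at hapc
        exact D.notMem_IwI_of_ne (ne_of_apply_ne D.len (by omega)) hapc

lemma IwI_simple_mul_subset_of_len {b : B} {w : W}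
    (hlen : D.len (D.cs.simple b * w) = D.len w + 1) :
    IwI D.I D.π (D.cs.simple b) * IwI D.I D.π w ⊆ IwI D.I D.π (D.cs.simple b * w) :=
  Set.mul_subset_iff.mpr fun _ ha _ hh =>
    (D.IwI_simple_mul_subset b w (Set.mul_mem_mul ha hh)).resolve_left
      (D.mul_notMem_IwI_of_len_simple_mul hlen ha hh)

lemma uniqueFactorization_simple {b : B} {w : W}
    (hlen : D.len (D.cs.simple b * w) = D.len w + 1) :
    UniqueFactorization D.I D.π (D.cs.simple b) w where
  mul_subset := D.IwI_simple_mul_subset_of_len hlen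
  inv_mul_mem a₁ ha₁ a₂ ha₂ c₁ hc₁ c₂ hc₂ h := by
    refine (D.IwI_simple_mul_self_subset b
      (Set.mul_mem_mul (D.inv_mem_IwI_simple ha₂) ha₁)).resolve_left fun ha => ?_
    have hc₂' : c₂ = a₂⁻¹ * a₁ * c₁ := by rw [mul_assoc, h]; group
    exact D.notMem_IwI_of_ne (ne_of_apply_ne D.len (by omega))
      (D.IwI_simple_mul_subset_of_len hlen (Set.mul_mem_mul ha hc₁)) (hc₂' ▸ hc₂)

lemma uniqueFactorization_of_len_add {w w' : W} (hlen : D.len w + D.len w' = D.len (w * w')) :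
    UniqueFactorization D.I D.π w w' := by
  obtain ⟨n, hn⟩ : ∃ n, D.len w = n := ⟨_, rfl⟩
  induction n generalizing w with
  | zero => exact D.uniqueFactorization_of_mem_Om (D.mem_Om_of_len_eq_zero hn) w'
  | succ n ih =>
    obtain ⟨b, v, rfl, hv⟩ := D.exists_eq_simple_mul (w := w) (by omega)
    have h₁ := D.len_mul_le v w'
    have h₂ := D.len_simple_mul_le b (v * w')
    rw [← mul_assoc] at h₂
    exact (D.uniqueFactorization_simple (w := v * w') (by rw [← mul_assoc]; omega)).mul_left
      D.π_surjective (ih (by omega) (by omega))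

theorem hconv_iw_of_len_add {w w' : W} (hlen : D.len w + D.len w' = D.len (w * w')) :
    hconv D.I (iw D.I D.π w) (iw D.I D.π w') = iw D.I D.π (w * w') := by
  have huf := D.uniqueFactorization_of_len_add hlen
  funext x
  rw [hconv_iw_apply]
  by_cases hx : x ∈ IwI D.I D.π (w * w')
  · obtain ⟨a, ha, c, hc, rfl⟩ := IwI_mul_subset D.π_surjective w w' hx
    have hcosets :
        leftCosetsIn D.I {a' ∈ IwI D.I D.π w | a'⁻¹ * (a * c) ∈ IwI D.I D.π w'} =
          {(a : G ⧸ D.I)} := by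
      ext y
      constructor
      · rintro ⟨a', ⟨ha', hc'⟩, rfl⟩
        exact QuotientGroup.eq.mpr (huf.inv_mul_mem a ha a' ha' c hc _ hc' (by group))
      · rintro rfl
        exact ⟨a, ⟨ha, by simpa using hc⟩, rfl⟩
    rw [hcosets, Set.ncard_singleton, iw_of_mem hx, Nat.cast_one]
  · have hcosets : {a ∈ IwI D.I D.π w | a⁻¹ * x ∈ IwI D.I D.π w'} = ∅ := by
      refine Set.eq_empty_of_forall_notMem fun a ⟨ha, hc⟩ => hx ?_
      simpa using huf.mul_subset (Set.mul_mem_mul ha hc)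
    rw [hcosets, leftCosetsIn, Set.image_empty, Set.ncard_empty, iw_of_notMem hx, Nat.cast_zero]

theorem hconv_iw_simple_self (b : B) :
    hconv D.I (iw D.I D.π (D.cs.simple b)) (iw D.I D.π (D.cs.simple b)) =
      fun g => (D.q (D.cs.simple b) : ℤ) * iw D.I D.π 1 g +
        ((D.q (D.cs.simple b) : ℤ) - 1) * iw D.I D.π (D.cs.simple b) g := by
  set s : W := ↑(D.cs.simple b)
  obtain ⟨hfin, hq⟩ := D.TF s
  have hs : (1 : W) ≠ s := ne_of_apply_ne D.len (by simp [s, D.len_one, D.len_simple])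
  funext x
  rw [hconv_iw_apply]
  by_cases hxI : x ∈ D.I
  · have hcosets : {a ∈ IwI D.I D.π s | a⁻¹ * x ∈ IwI D.I D.π s} = IwI D.I D.π s :=
      Set.sep_eq_self_iff_mem_true.mpr fun a ha => mul_mem_IwI_right (D.inv_mem_IwI_simple ha) hxI
    have hx1 : x ∈ IwI D.I D.π 1 := D.IwI_one_eq ▸ hxI
    rw [hcosets, ← hq, iw_of_mem hx1, iw_of_notMem (D.notMem_IwI_of_ne hs hx1)]
    ring
  have hx1 : x ∉ IwI D.I D.π 1 := by rwa [D.IwI_one_eq]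
  by_cases hxs : x ∈ IwI D.I D.π s
  · have hcosets : leftCosetsIn D.I {a ∈ IwI D.I D.π s | a⁻¹ * x ∈ IwI D.I D.π s} =
        leftCosetsIn D.I (IwI D.I D.π s) \ {(x : G ⧸ D.I)} := by
      ext y
      constructor
      · rintro ⟨a, ⟨ha, hax⟩, rfl⟩
        refine ⟨⟨a, ha, rfl⟩, fun hy => ?_⟩
        have : a⁻¹ * x ∈ IwI D.I D.π 1 := D.IwI_one_eq ▸ QuotientGroup.eq.mp hy
        exact D.notMem_IwI_of_ne hs this hax
      · rintro ⟨⟨a, ha, rfl⟩, hy⟩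
        refine ⟨a, ⟨ha, ?_⟩, rfl⟩
        exact (D.IwI_simple_mul_self_subset b
          (Set.mul_mem_mul (D.inv_mem_IwI_simple ha) hxs)).resolve_right
          fun h => hy (QuotientGroup.eq.mpr h)
    have hcard := Set.ncard_sdiff_singleton_add_one
      (s := leftCosetsIn D.I (IwI D.I D.π s)) (a := (x : G ⧸ D.I)) ⟨x, hxs, rfl⟩ hfin
    rw [hcosets, iw_of_notMem hx1, iw_of_mem hxs, hq, ← hcard]
    push_cast
    ring
  · have hcosets : {a ∈ IwI D.I D.π s | a⁻¹ * x ∈ IwI D.I D.π s} = ∅ := by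
      refine Set.eq_empty_of_forall_notMem fun a ⟨ha, hax⟩ => ?_
      have := D.IwI_simple_mul_self_subset b (Set.mul_mem_mul ha hax)
      rw [mul_inv_cancel_left] at this
      exact this.elim hxs hxI
    rw [hcosets, leftCosetsIn, Set.image_empty, Set.ncard_empty,
      iw_of_notMem hx1, iw_of_notMem hxs]
    simp

end IwahoriHeckeSetup

/-- **The Iwahori–Matsumoto presentation** (braid and quadratic relations): in the
Iwahori–Hecke ring `H(G,I)`, one has
`i_w ⋆ i_{w'} = i_{ww'}` whenever `ℓ(w) + ℓ(w') = ℓ(ww')`, and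
`i_s ⋆ i_s = q_s · i_1 + (q_s − 1) · i_s` for every simple reflection `s ∈ S`. -/
theorem iwahori_matsumoto_presentation {G W B : Type} [Group G] [Group W]
    {M : CoxeterMatrix B} (D : IwahoriHeckeSetup G W B M) :
    (∀ w w' : W, D.len w + D.len w' = D.len (w * w') →
        hconv D.I (iw D.I D.π w) (iw D.I D.π w') = iw D.I D.π (w * w')) ∧
    (∀ b : B,
        hconv D.I (iw D.I D.π (D.cs.simple b : W)) (iw D.I D.π (D.cs.simple b : W)) =
          fun g => (D.q (D.cs.simple b : W) : ℤ) * iw D.I D.π 1 g +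
            ((D.q (D.cs.simple b : W) : ℤ) - 1) * iw D.I D.π (D.cs.simple b : W) g) :=
  ⟨fun _ _ => D.hconv_iw_of_len_add, D.hconv_iw_simple_self⟩
end

section
/- The map u ↦ i_u is an injective group homomorphism from Ω into the group of units of H(G,I) (in particular i_u ⋆ i_{u'} = i_{uu'} and every i_u is invertible), and for every w ∈ W̃ and u ∈ Ω one has i_w ⋆ i_u = i_u ⋆ i_{u⁻¹wu}. -/
open scoped Pointwise

/-!
A representative `n ∈ N` of `u ∈ Ω` normalizes `I`, so `IuI = In = nI` is a single coset of `I`.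
Convolving with the indicator of a single coset is a translation by `n`, and translating `IwI`
by `n` gives `I(wu)I` (resp. `I(uw)I`).  Hence `i_w ⋆ i_u = i_{wu}` and `i_u ⋆ i_w = i_{uw}`,
from which all four claims follow; injectivity holds for all of `W̃` because of (T0).
-/

open MulOpposite

section Convolution

variable {G : Type} [Group G] {I : Subgroup G} {f : G → ℤ}

lemma out_inv_mul_mem_iff (y : G ⧸ I) (g : G) : (Quotient.out y)⁻¹ * g ∈ I ↔ y = g := by
  rw [← QuotientGroup.eq, QuotientGroup.out_eq']

lemma hconv_indicator_rightCoset (hf : ∀ i ∈ I, ∀ g, f (g * i) = f g) (n x : G) :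
    hconv I f ((op n • (I : Set G)).indicator fun _ => 1) x = f (x * n⁻¹) := by
  have hsupp (y : G ⧸ I) : (Quotient.out y)⁻¹ * x ∈ op n • (I : Set G) ↔ y = ↑(x * n⁻¹) := by
    rw [mem_rightCoset_iff, SetLike.mem_coe, mul_assoc, out_inv_mul_mem_iff]
  obtain ⟨i, hi⟩ := QuotientGroup.mk_out_eq_mul I (x * n⁻¹)
  rw [hconv, finsum_eq_single _ (↑(x * n⁻¹)) fun y hy => by simp [hsupp, hy],
    Set.indicator_of_mem ((hsupp _).2 rfl), mul_one, hi, hf _ i.2]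

lemma hconv_indicator_leftCoset (hf : ∀ i ∈ I, ∀ g, f (i * g) = f g) (n x : G) :
    hconv I ((n • (I : Set G)).indicator fun _ => 1) f x = f (n⁻¹ * x) := by
  have hsupp (y : G ⧸ I) : Quotient.out y ∈ n • (I : Set G) ↔ y = n := by
    rw [mem_leftCoset_iff, SetLike.mem_coe, ← inv_mem_iff, mul_inv_rev, inv_inv,
      out_inv_mul_mem_iff]
  obtain ⟨i, hi⟩ := QuotientGroup.mk_out_eq_mul I n
  rw [hconv, finsum_eq_single _ (n : G ⧸ I) fun y hy => by simp [hsupp, hy],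
    Set.indicator_of_mem ((hsupp _).2 rfl), one_mul, hi, mul_inv_rev, mul_assoc,
    hf _ (inv_mem i.2)]

end Convolution

section DoubleCosets

variable {G W : Type} [Group G] [Group W] {I N : Subgroup G} {π : N →* W} {w : W} {x i : G}

lemma mul_mem_IwI_iff (hi : i ∈ I) : x * i ∈ IwI I π w ↔ x ∈ IwI I π w := by
  refine ⟨fun ⟨n, hn, a, ha, b, hb, h⟩ => ⟨n, hn, a, ha, b * i⁻¹, mul_mem hb (inv_mem hi), ?_⟩,
    fun ⟨n, hn, a, ha, b, hb, h⟩ => ⟨n, hn, a, ha, b * i, mul_mem hb hi, by rw [h]; group⟩⟩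
  rw [← mul_inv_cancel_right x i, h]; group

lemma mul_mem_IwI_iff_left (hi : i ∈ I) : i * x ∈ IwI I π w ↔ x ∈ IwI I π w := by
  refine ⟨fun ⟨n, hn, a, ha, b, hb, h⟩ => ⟨n, hn, i⁻¹ * a, mul_mem (inv_mem hi) ha, b, hb, ?_⟩,
    fun ⟨n, hn, a, ha, b, hb, h⟩ => ⟨n, hn, i * a, mul_mem hi ha, b, hb, by rw [h]; group⟩⟩
  rw [← inv_mul_cancel_left i x, h]; group

lemma mul_mem_IwI_mul {n : N} (hn : (n : G) ∈ Subgroup.normalizer (I : Set G))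
    (hx : x ∈ IwI I π w) :
    x * n ∈ IwI I π (w * π n) := by
  obtain ⟨m, rfl, a, ha, b, hb, rfl⟩ := hx
  refine ⟨m * n, map_mul π m n, a, ha, (n : G)⁻¹ * b * n, ?_, by push_cast; group⟩
  simpa using (Subgroup.mem_normalizer_iff.1 (inv_mem hn) b).1 hb

lemma mul_mem_IwI_mul_left {n : N} (hn : (n : G) ∈ Subgroup.normalizer (I : Set G))
    (hx : x ∈ IwI I π w) :
    n * x ∈ IwI I π (π n * w) := by
  obtain ⟨m, rfl, a, ha, b, hb, rfl⟩ := hx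
  exact ⟨n * m, map_mul π n m, n * a * (n : G)⁻¹, (Subgroup.mem_normalizer_iff.1 hn a).1 ha,
    b, hb, by push_cast; group⟩

lemma mem_IwI_mul_iff {n : N} (hn : (n : G) ∈ Subgroup.normalizer (I : Set G)) :
    x ∈ IwI I π (w * π n) ↔ x * (n : G)⁻¹ ∈ IwI I π w := by
  have hn' : ((n⁻¹ : N) : G) ∈ Subgroup.normalizer (I : Set G) := by simpa using inv_mem hn
  exact ⟨fun h => by simpa using mul_mem_IwI_mul hn' h,
    fun h => by simpa using mul_mem_IwI_mul hn h⟩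

lemma mem_IwI_mul_iff_left {n : N} (hn : (n : G) ∈ Subgroup.normalizer (I : Set G)) :
    x ∈ IwI I π (π n * w) ↔ (n : G)⁻¹ * x ∈ IwI I π w := by
  have hn' : ((n⁻¹ : N) : G) ∈ Subgroup.normalizer (I : Set G) := by simpa using inv_mem hn
  exact ⟨fun h => by simpa using mul_mem_IwI_mul_left hn' h,
    fun h => by simpa using mul_mem_IwI_mul_left hn h⟩

lemma iw_apply_mul (hi : i ∈ I) : iw I π w (x * i) = iw I π w x :=
  Set.indicator_const_eq_indicator_const (mul_mem_IwI_iff hi)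

lemma iw_apply_mul_left (hi : i ∈ I) : iw I π w (i * x) = iw I π w x :=
  Set.indicator_const_eq_indicator_const (mul_mem_IwI_iff_left hi)

lemma iw_mul_apply {n : N} (hn : (n : G) ∈ Subgroup.normalizer (I : Set G)) :
    iw I π (w * π n) x = iw I π w (x * (n : G)⁻¹) :=
  Set.indicator_const_eq_indicator_const (mem_IwI_mul_iff hn)

lemma iw_mul_apply_left {n : N} (hn : (n : G) ∈ Subgroup.normalizer (I : Set G)) :
    iw I π (π n * w) x = iw I π w ((n : G)⁻¹ * x) :=
  Set.indicator_const_eq_indicator_const (mem_IwI_mul_iff_left hn)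

end DoubleCosets

namespace IwahoriHeckeSetup

variable {G W B : Type} [Group G] [Group W] {M : CoxeterMatrix B}
  (D : IwahoriHeckeSetup G W B M)

lemma IwI_one : IwI D.I D.π 1 = (D.I : Set G) := by
  ext g
  refine ⟨fun ⟨n, hn, i, hi, j, hj, h⟩ => h ▸ mul_mem (mul_mem hi ((D.π_ker n).1 hn)) hj,
    fun hg => ⟨1, map_one _, g, hg, 1, one_mem _, by simp⟩⟩

lemma mem_normalizer_of_mem_Om {n : D.N} (hn : D.π n ∈ D.Om) :
    (n : G) ∈ Subgroup.normalizer (D.I : Set G) :=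
  Subgroup.mem_normalizer_iff.2 fun i =>
    ⟨D.TOm n hn i, fun h => by simpa [mul_assoc] using D.TOm n⁻¹ (by simpa using inv_mem hn) _ h⟩

lemma iw_eq_indicator_rightCoset {n : D.N} (hn : D.π n ∈ D.Om) :
    iw D.I D.π (D.π n) = (op (n : G) • (D.I : Set G)).indicator fun _ => 1 := by
  unfold iw
  congr 1
  ext x
  rw [← one_mul (D.π n), mem_IwI_mul_iff (D.mem_normalizer_of_mem_Om hn), IwI_one,
    mem_rightCoset_iff]

lemma iw_eq_indicator_leftCoset {n : D.N} (hn : D.π n ∈ D.Om) :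
    iw D.I D.π (D.π n) = ((n : G) • (D.I : Set G)).indicator fun _ => 1 := by
  unfold iw
  congr 1
  ext x
  rw [← mul_one (D.π n), mem_IwI_mul_iff_left (D.mem_normalizer_of_mem_Om hn), IwI_one,
    mem_leftCoset_iff]

lemma hconv_iw_iw_of_mem_Om (w : W) {u : W} (hu : u ∈ D.Om) :
    hconv D.I (iw D.I D.π w) (iw D.I D.π u) = iw D.I D.π (w * u) := by
  obtain ⟨n, rfl⟩ := D.π_surjective u
  funext x
  rw [D.iw_eq_indicator_rightCoset hu,
    hconv_indicator_rightCoset (fun i hi _ => iw_apply_mul hi),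
    iw_mul_apply (D.mem_normalizer_of_mem_Om hu)]

lemma hconv_iw_of_mem_Om_iw {u : W} (hu : u ∈ D.Om) (w : W) :
    hconv D.I (iw D.I D.π u) (iw D.I D.π w) = iw D.I D.π (u * w) := by
  obtain ⟨n, rfl⟩ := D.π_surjective u
  funext x
  rw [D.iw_eq_indicator_leftCoset hu,
    hconv_indicator_leftCoset (fun i hi _ => iw_apply_mul_left hi),
    iw_mul_apply_left (D.mem_normalizer_of_mem_Om hu)]

lemma iw_injective : Function.Injective (iw D.I D.π) := by
  intro u u' h
  by_contra hne
  obtain ⟨n, rfl⟩ := D.π_surjective u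
  have hn : (n : G) ∈ IwI D.I D.π (D.π n) := ⟨n, rfl, 1, one_mem _, 1, one_mem _, by simp⟩
  have hn' : (n : G) ∈ IwI D.I D.π u' := Set.mem_of_indicator_ne_zero
    (show iw D.I D.π u' n ≠ 0 by rw [← congr_fun h n, iw, Set.indicator_of_mem hn]; simp)
  exact Set.disjoint_left.1 (D.T0_disjoint _ _ hne) hn hn'

lemma isHeckeElt_iw (w : W) : IsHeckeElt D.I D.π (iw D.I D.π w) := by
  refine ⟨fun i hi _ => iw_apply_mul_left hi, fun i hi _ => iw_apply_mul hi,
    (Set.finite_singleton w).subset ?_⟩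
  rintro v ⟨g, hg, hne⟩
  by_contra hvw
  exact Set.disjoint_left.1 (D.T0_disjoint v w hvw) hg (Set.mem_of_indicator_ne_zero hne)

end IwahoriHeckeSetup

/-- The map `u ↦ i_u` is an injective group homomorphism from `Ω` into the group of units of
`H(G,I)`: `i_u ⋆ i_{u'} = i_{uu'}`, `u ↦ i_u` is injective on `Ω`, every `i_u` (`u ∈ Ω`) has a
two-sided inverse in `H(G,I)` (with unit `i_1`); moreover `i_w ⋆ i_u = i_u ⋆ i_{u⁻¹wu}` for
every `w ∈ W̃` and `u ∈ Ω`. -/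
theorem omega_units {G W B : Type} [Group G] [Group W]
    {M : CoxeterMatrix B} (D : IwahoriHeckeSetup G W B M) :
    (∀ u ∈ D.Om, ∀ u' ∈ D.Om,
        hconv D.I (iw D.I D.π u) (iw D.I D.π u') = iw D.I D.π (u * u')) ∧
    (∀ u ∈ D.Om, ∀ u' ∈ D.Om, iw D.I D.π u = iw D.I D.π u' → u = u') ∧
    (∀ u ∈ D.Om, ∃ f : G → ℤ, IsHeckeElt D.I D.π f ∧
        hconv D.I (iw D.I D.π u) f = iw D.I D.π 1 ∧
        hconv D.I f (iw D.I D.π u) = iw D.I D.π 1) ∧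
    (∀ w : W, ∀ u ∈ D.Om,
        hconv D.I (iw D.I D.π w) (iw D.I D.π u) =
          hconv D.I (iw D.I D.π u) (iw D.I D.π (u⁻¹ * w * u))) := by
  refine ⟨fun u _ u' hu' => D.hconv_iw_iw_of_mem_Om u hu',
    fun u _ u' _ h => D.iw_injective h, fun u hu => ?_, fun w u hu => ?_⟩
  · refine ⟨iw D.I D.π u⁻¹, D.isHeckeElt_iw u⁻¹, ?_, ?_⟩
    · rw [D.hconv_iw_iw_of_mem_Om u (inv_mem hu), mul_inv_cancel]
    · rw [D.hconv_iw_iw_of_mem_Om u⁻¹ hu, inv_mul_cancel]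
  · rw [D.hconv_iw_iw_of_mem_Om w hu, D.hconv_iw_of_mem_Om_iw hu]
    group
end
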